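/- arXiv:1608.07247 — 6 statements merged into one kernel-verified Lean document; each statement's English description precedes it below -/
import Mathlib

section
/- For every integer k ≥ 2, a_k(2) = 2k - 1; that is, the minimum cardinality of a finite set S ⊆ ℤ×ℤ having exactly 2 patterns of length k is 2k - 1. -/
open Finset Filter

/-- The four directions: horizontal, vertical and the two diagonals. -/
def Dirs : Finset (ℤ × ℤ) := {(1, 0), (0, 1), (1, 1), (1, -1)}

/-- `p` is the start of a pattern of length `k` of `S` in direction `d`:
`p + t • d ∈ S` for all `0 ≤ t < k`, while `p - d ∉ S` and `p + k • d ∉ S`. -/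
def IsPatternStart (S : Finset (ℤ × ℤ)) (k : ℕ) (d p : ℤ × ℤ) : Prop :=
  (∀ t : ℕ, t < k → p + (t : ℤ) • d ∈ S) ∧ p - d ∉ S ∧ p + (k : ℤ) • d ∉ S

/-- `P_k(S)`: the number of pairs `(d, p)` with `d ∈ Dirs` and `p` the start of a
pattern of length `k` of `S` in direction `d`. -/
noncomputable def patternCount (S : Finset (ℤ × ℤ)) (k : ℕ) : ℕ :=
  Set.ncard {dp : (ℤ × ℤ) × (ℤ × ℤ) | dp.1 ∈ Dirs ∧ IsPatternStart S k dp.1 dp.2}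

/-- `a_k(n)`: the minimum cardinality of a finite `S ⊆ ℤ × ℤ` with exactly `n`
patterns of length `k`. -/
noncomputable def minPoints (k n : ℕ) : ℕ :=
  sInf {c | ∃ S : Finset (ℤ × ℤ), patternCount S k = n ∧ S.card = c}

/-- The optimal example: a horizontal segment of length `k` joined at its right
end to a diagonal segment of length `k`. -/
def S0 (k : ℕ) : Finset (ℤ × ℤ) :=
  ((Finset.range k).image fun t : ℕ => ((t : ℤ), (0 : ℤ))) ∪
  ((Finset.range (k-1)).image fun t : ℕ => ((k : ℤ) + t, (t : ℤ) + 1))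

lemma mem_S0 {k : ℕ} {q : ℤ × ℤ} : q ∈ S0 k ↔
    (0 ≤ q.1 ∧ q.1 ≤ (k:ℤ) - 1 ∧ q.2 = 0) ∨
    (1 ≤ q.2 ∧ q.2 ≤ (k:ℤ) - 1 ∧ q.1 = (k:ℤ) - 1 + q.2) := by
  simp only [S0, Finset.mem_union, Finset.mem_image, Finset.mem_range]
  constructor
  · rintro (⟨t, ht, rfl⟩ | ⟨t, ht, rfl⟩) <;> simp <;> omega
  · rintro (⟨h1, h2, h3⟩ | ⟨h1, h2, h3⟩)
    · exact Or.inl ⟨q.1.toNat, by omega, by cases q with | mk x y => simp_all⟩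
    · exact Or.inr ⟨(q.2 - 1).toNat, by omega, by cases q with | mk x y => simp_all; constructor <;> omega⟩

lemma card_S0 {k : ℕ} (hk : 2 ≤ k) : (S0 k).card = 2 * k - 1 := by
  rw [S0, Finset.card_union_of_disjoint, Finset.card_image_of_injective,
    Finset.card_image_of_injective, Finset.card_range, Finset.card_range]
  · omega
  · intro a b h; simpa using h
  · intro a b h; simp [Prod.ext_iff] at h; omega
  · rw [Finset.disjoint_left]
    rintro q hq hq'
    simp [Prod.ext_iff] at hq hq'
    obtain ⟨t, ht, h1, h2⟩ := hq
    obtain ⟨s, hs, h3, h4⟩ := hq'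
    omega

lemma dirs_mem {d : ℤ × ℤ} : d ∈ Dirs ↔ d = (1,0) ∨ d = (0,1) ∨ d = (1,1) ∨ d = (1,-1) := by
  simp [Dirs]

lemma smul_inj {d : ℤ × ℤ} (hd : d ∈ Dirs) {a b : ℤ} (h : a • d = b • d) : a = b := by
  rw [dirs_mem] at hd
  rcases hd with rfl | rfl | rfl | rfl <;>
    simp [Prod.ext_iff, Prod.smul_mk] at h <;> omega

lemma indep {d₁ d₂ : ℤ × ℤ} (h₁ : d₁ ∈ Dirs) (h₂ : d₂ ∈ Dirs) (hne : d₁ ≠ d₂)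
    {a b : ℤ} (hab : a • d₁ = b • d₂) : a = 0 ∧ b = 0 := by
  rw [dirs_mem] at h₁ h₂
  rcases h₁ with rfl | rfl | rfl | rfl <;> rcases h₂ with rfl | rfl | rfl | rfl <;>
    simp [Prod.ext_iff, Prod.smul_mk] at hab hne ⊢ <;> omega

lemma pt_arith (p d : ℤ × ℤ) (c : ℤ) : p + c • d = (p.1 + c * d.1, p.2 + c * d.2) := by
  cases p; cases d; simp [Prod.ext_iff, mul_comm]

lemma pt_sub (p d : ℤ × ℤ) : p - d = (p.1 - d.1, p.2 - d.2) := rfl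

/-- The set `S0 k` has exactly two patterns of length `k`. -/
lemma pattern_S0 (k : ℕ) (hk : 2 ≤ k) :
    {dp : (ℤ × ℤ) × (ℤ × ℤ) | dp.1 ∈ Dirs ∧ IsPatternStart (S0 k) k dp.1 dp.2} =
    {((1,0),(0,0)), ((1,1),((k:ℤ)-1,0))} := by
  ext ⟨d, p⟩
  simp only [Set.mem_setOf_eq, Set.mem_insert_iff, Set.mem_singleton_iff, Prod.mk.injEq]
  constructor
  · rintro ⟨hd, h1, h2, h3⟩
    have hp0 := h1 0 (by omega)
    have hp1 := h1 1 (by omega)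
    rw [pt_arith, mem_S0] at hp0 hp1
    rw [pt_sub, mem_S0] at h2
    rw [pt_arith, mem_S0] at h3
    rw [dirs_mem] at hd
    simp only at hp0 hp1 h2 h3
    rcases hd with rfl | rfl | rfl | rfl
    · -- horizontal: p = (0,0)
      left
      refine ⟨rfl, ?_⟩
      have hx : p.2 = 0 ∧ 0 ≤ p.1 ∧ p.1 ≤ (k:ℤ) - 2 := by
        simp only at hp0 hp1; omega
      simp only at h2
      have : p.1 = 0 := by omega
      exact Prod.ext this hx.1
    · exfalso; simp only at hp0 hp1; omega
    · -- diagonal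
      right
      refine ⟨rfl, ?_⟩
      simp only at h2 hp0 hp1
      have : p.1 = (k:ℤ) - 1 ∧ p.2 = 0 := by omega
      exact Prod.ext this.1 this.2
    · exfalso; simp only at hp0 hp1; omega
  · rintro (⟨rfl, rfl⟩ | ⟨rfl, rfl⟩)
    · refine ⟨by rw [dirs_mem]; tauto, fun t ht => ?_, ?_, ?_⟩
      · rw [pt_arith, mem_S0]; simp; omega
      · rw [pt_sub, mem_S0]; simp
      · rw [pt_arith, mem_S0]; simp
    · refine ⟨by rw [dirs_mem]; tauto, fun t ht => ?_, ?_, ?_⟩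
      · rw [pt_arith, mem_S0]; simp; omega
      · rw [pt_sub, mem_S0]; simp
      · rw [pt_arith, mem_S0]; simp; omega

lemma patternCount_S0 {k : ℕ} (hk : 2 ≤ k) : patternCount (S0 k) k = 2 := by
  rw [patternCount, pattern_S0 k hk]
  rw [Set.ncard_pair]
  simp [Prod.ext_iff]

/-- Two maximal runs in the same direction cannot overlap. -/
lemma no_overlap {S : Finset (ℤ × ℤ)} {k : ℕ} {d p₁ p₂ : ℤ × ℤ}
    (h₁ : IsPatternStart S k d p₁) (h₂ : IsPatternStart S k d p₂)
    {s t : ℕ} (hs : s < k) (hlt : t < s) (he : p₁ + (s : ℤ) • d = p₂ + (t : ℤ) • d) :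
    False := by
  have hc : ((k - (s - t) : ℕ) : ℤ) = (k : ℤ) - s + t := by omega
  have hm : p₂ + ((k - (s - t) : ℕ) : ℤ) • d = p₁ + (k : ℤ) • d := by
    rw [pt_arith, pt_arith] at he ⊢
    rw [Prod.ext_iff] at he ⊢
    simp only at he ⊢
    constructor
    · rw [hc]; linear_combination -he.1
    · rw [hc]; linear_combination -he.2
  exact h₁.2.2 (hm ▸ h₂.1 (k - (s - t)) (by omega))

lemma lower_bound {k : ℕ} (hk : 2 ≤ k) (S : Finset (ℤ × ℤ))
    (h : patternCount S k = 2) : 2 * k - 1 ≤ S.card := by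
  obtain ⟨a, b, hab, hset⟩ := Set.ncard_eq_two.mp h
  have ha : a.1 ∈ Dirs ∧ IsPatternStart S k a.1 a.2 := by
    have : a ∈ {dp : (ℤ × ℤ) × (ℤ × ℤ) | dp.1 ∈ Dirs ∧ IsPatternStart S k dp.1 dp.2} := by
      rw [hset]; simp
    exact this
  have hb : b.1 ∈ Dirs ∧ IsPatternStart S k b.1 b.2 := by
    have : b ∈ {dp : (ℤ × ℤ) × (ℤ × ℤ) | dp.1 ∈ Dirs ∧ IsPatternStart S k dp.1 dp.2} := by
      rw [hset]; simp
    exact this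
  set Ta := (Finset.range k).image (fun t : ℕ => a.2 + (t : ℤ) • a.1) with hTa
  set Tb := (Finset.range k).image (fun t : ℕ => b.2 + (t : ℤ) • b.1) with hTb
  have hTaS : Ta ⊆ S := by
    intro q hq; simp only [hTa, Finset.mem_image, Finset.mem_range] at hq
    obtain ⟨t, ht, rfl⟩ := hq; exact ha.2.1 t ht
  have hTbS : Tb ⊆ S := by
    intro q hq; simp only [hTb, Finset.mem_image, Finset.mem_range] at hq
    obtain ⟨t, ht, rfl⟩ := hq; exact hb.2.1 t ht
  have hcardTa : Ta.card = k := by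
    rw [hTa, Finset.card_image_of_injective _ ?_, Finset.card_range]
    intro s t hst
    have := smul_inj ha.1 (add_left_cancel hst)
    exact_mod_cast this
  have hcardTb : Tb.card = k := by
    rw [hTb, Finset.card_image_of_injective _ ?_, Finset.card_range]
    intro s t hst
    have := smul_inj hb.1 (add_left_cancel hst)
    exact_mod_cast this
  have hinter : (Ta ∩ Tb).card ≤ 1 := by
    by_cases hdd : a.1 = b.1
    · -- same direction: the two runs are disjoint
      have : Ta ∩ Tb = ∅ := by
        rw [Finset.eq_empty_iff_forall_notMem]
        intro q hq
        rw [Finset.mem_inter] at hq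
        simp only [hTa, hTb, Finset.mem_image, Finset.mem_range] at hq
        obtain ⟨⟨s, hs, hqs⟩, ⟨t, ht, hqt⟩⟩ := hq
        rw [← hqt] at hqs
        rw [← hdd] at hqs
        have hb2 : IsPatternStart S k a.1 b.2 := by rw [hdd]; exact hb.2
        rcases lt_trichotomy t s with hlt | heq | hlt
        · exact no_overlap ha.2 hb2 hs hlt hqs
        · subst heq
          have : a.2 = b.2 := by
            have := add_right_cancel hqs; exact this
          exact hab (Prod.ext hdd (by rw [this]))
        · exact no_overlap hb2 ha.2 ht hlt hqs.symm
      rw [this]; simp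
    · -- different directions: the two runs meet in at most one point
      rw [Finset.card_le_one]
      intro q hq q' hq'
      rw [Finset.mem_inter] at hq hq'
      simp only [hTa, hTb, Finset.mem_image, Finset.mem_range] at hq hq'
      obtain ⟨⟨s₁, hs₁, hq1⟩, ⟨t₁, ht₁, hq2⟩⟩ := hq
      obtain ⟨⟨s₂, hs₂, hq3⟩, ⟨t₂, ht₂, hq4⟩⟩ := hq'
      have key : ((s₁ : ℤ) - s₂) • a.1 = ((t₁ : ℤ) - t₂) • b.1 := by
        have e1 : q - q' = ((s₁ : ℤ) - s₂) • a.1 := by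
          rw [← hq1, ← hq3, sub_smul]; abel
        have e2 : q - q' = ((t₁ : ℤ) - t₂) • b.1 := by
          rw [← hq2, ← hq4, sub_smul]; abel
        rw [← e1, e2]
      have := indep ha.1 hb.1 hdd key
      have hs : (s₁ : ℤ) = s₂ := by omega
      rw [← hq1, ← hq3, hs]
  have := Finset.card_union_add_card_inter Ta Tb
  have hU : (Ta ∪ Tb).card ≤ S.card := Finset.card_le_card (Finset.union_subset hTaS hTbS)
  omega

theorem stmt1 (k : ℕ) (hk : 2 ≤ k) : minPoints k 2 = 2 * k - 1 := by
  have hmem : 2 * k - 1 ∈ {c | ∃ S : Finset (ℤ × ℤ), patternCount S k = 2 ∧ S.card = c} :=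
    ⟨S0 k, patternCount_S0 hk, card_S0 hk⟩
  refine le_antisymm (Nat.sInf_le hmem) (le_csInf ⟨_, hmem⟩ ?_)
  rintro c ⟨S, hS, rfl⟩
  exact lower_bound hk S hS
end

section
/- For integers 1 ≤ k < m, the rectangular array S = {0,...,m-1} × {0,...,k-1} ⊆ ℤ×ℤ (m columns and k rows) has exactly 3m - 2k + 2 patterns of length k; consequently a_k(3m - 2k + 2) ≤ k·m. -/
open Finset Filter

lemma memS (m k : ℕ) (a b : ℤ) :
    (a, b) ∈ (Finset.range m ×ˢ Finset.range k).image
      (fun p => ((p.1 : ℤ), (p.2 : ℤ))) ↔ 0 ≤ a ∧ a < m ∧ 0 ≤ b ∧ b < k := by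
  simp only [Finset.mem_image, Finset.mem_product, Finset.mem_range, Prod.exists,
    Prod.mk.injEq]
  constructor
  · rintro ⟨x, y, ⟨hx, hy⟩, rfl, rfl⟩; omega
  · rintro ⟨ha, ham, hb, hbk⟩
    exact ⟨a.toNat, b.toNat, ⟨by omega, by omega⟩, by omega, by omega⟩

lemma patternSet_eq (m k : ℕ) (hk : 1 ≤ k) (hkm : k < m) :
    {dp : (ℤ × ℤ) × (ℤ × ℤ) | dp.1 ∈ Dirs ∧
      IsPatternStart ((Finset.range m ×ˢ Finset.range k).image
        fun p => ((p.1 : ℤ), (p.2 : ℤ))) k dp.1 dp.2} =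
    ↑(((Finset.Ico (0:ℤ) m).image fun x => (((0:ℤ),(1:ℤ)), (x, (0:ℤ)))) ∪
      ((Finset.Icc (0:ℤ) ((m:ℤ) - k)).image fun x => (((1:ℤ),(1:ℤ)), (x, (0:ℤ)))) ∪
      ((Finset.Icc (0:ℤ) ((m:ℤ) - k)).image fun x => (((1:ℤ),(-1:ℤ)), (x, ((k:ℤ) - 1))))) := by
  ext ⟨⟨d1, d2⟩, x, y⟩
  simp only [Set.mem_setOf_eq, Dirs, IsPatternStart, Finset.coe_union, Set.mem_union,
    Finset.coe_image, Set.mem_image, Finset.mem_coe, Finset.mem_Ico, Finset.mem_Icc,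
    Finset.mem_insert, Finset.mem_singleton, Prod.mk.injEq, Prod.smul_def, smul_eq_mul,
    Prod.mk_add_mk, Prod.mk_sub_mk, mul_one, mul_zero, mul_neg, add_zero, memS]
  constructor
  · rintro ⟨(⟨rfl, rfl⟩ | ⟨rfl, rfl⟩ | ⟨rfl, rfl⟩ | ⟨rfl, rfl⟩), h1, h2, h3⟩
    · -- d = (1,0): impossible
      exfalso
      have h0 := h1 0 (by omega)
      have hl := h1 (k - 1) (by omega)
      simp only [Nat.cast_zero, add_zero] at h0
      omega
    · -- d = (0,1)
      left; left
      have h0 := h1 0 (by omega)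
      have hl := h1 (k - 1) (by omega)
      simp only [Nat.cast_zero, add_zero] at h0
      exact ⟨x, ⟨by omega, by omega⟩, ⟨rfl, rfl⟩, rfl, by omega⟩
    · -- d = (1,1)
      left; right
      have h0 := h1 0 (by omega)
      have hl := h1 (k - 1) (by omega)
      simp only [Nat.cast_zero, add_zero] at h0
      exact ⟨x, ⟨by omega, by omega⟩, ⟨rfl, rfl⟩, rfl, by omega⟩
    · -- d = (1,-1)
      right
      have h0 := h1 0 (by omega)
      have hl := h1 (k - 1) (by omega)
      simp only [Nat.cast_zero, add_zero] at h0
      exact ⟨x, ⟨by omega, by omega⟩, ⟨rfl, rfl⟩, rfl, by omega⟩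
  · rintro ((⟨z, ⟨hz0, hzm⟩, ⟨rfl, rfl⟩, rfl, rfl⟩ | ⟨z, ⟨hz0, hzm⟩, ⟨rfl, rfl⟩, rfl, rfl⟩) |
      ⟨z, ⟨hz0, hzm⟩, ⟨rfl, rfl⟩, rfl, rfl⟩)
    · refine ⟨by tauto, fun t ht => ?_, by omega, by omega⟩
      refine ⟨by omega, by omega, by omega, by omega⟩
    · refine ⟨by tauto, fun t ht => ?_, by omega, by omega⟩
      refine ⟨by omega, by omega, by omega, by omega⟩
    · refine ⟨by tauto, fun t ht => ?_, by omega, by omega⟩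
      refine ⟨by omega, by omega, by omega, by omega⟩

theorem stmt4 (k m : ℕ) (hk : 1 ≤ k) (hkm : k < m) :
    patternCount ((Finset.range m ×ˢ Finset.range k).image
      fun p => ((p.1 : ℤ), (p.2 : ℤ))) k = 3 * m - 2 * k + 2 ∧
    minPoints k (3 * m - 2 * k + 2) ≤ k * m := by
  have hcount : patternCount ((Finset.range m ×ˢ Finset.range k).image
      fun p => ((p.1 : ℤ), (p.2 : ℤ))) k = 3 * m - 2 * k + 2 := by
    unfold patternCount
    rw [patternSet_eq m k hk hkm, Set.ncard_coe_finset]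
    rw [Finset.card_union_of_disjoint, Finset.card_union_of_disjoint]
    · rw [Finset.card_image_of_injective _ (fun a b h => by simpa using h),
        Finset.card_image_of_injective _ (fun a b h => by simpa using h),
        Finset.card_image_of_injective _ (fun a b h => by simpa using h),
        Int.card_Ico, Int.card_Icc]
      omega
    · simp only [Finset.disjoint_left, Finset.mem_image, Finset.mem_Icc]
      rintro p ⟨z, hz, rfl⟩ ⟨w, hw, hww⟩
      simp [Prod.ext_iff] at hww
    · simp only [Finset.disjoint_left, Finset.mem_union, Finset.mem_image, Finset.mem_Ico,
        Finset.mem_Icc]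
      rintro p (⟨z, hz, rfl⟩ | ⟨z, hz, rfl⟩) ⟨w, hw, hww⟩ <;>
        simp [Prod.ext_iff] at hww
  refine ⟨hcount, ?_⟩
  apply Nat.sInf_le
  refine ⟨_, hcount, ?_⟩
  rw [Finset.card_image_of_injective, Finset.card_product, Finset.card_range,
    Finset.card_range, Nat.mul_comm]
  intro a b h
  simp only [Prod.mk.injEq, Nat.cast_inj] at h
  exact Prod.ext h.1 h.2
end

section
/- For every integer k ≥ 2, the sequence n ↦ a_k(n) is subadditive: for all n, m ≥ 0, a_k(n + m) ≤ a_k(n) + a_k(m). -/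
open Finset Filter
def PStarts (S : Finset (ℤ × ℤ)) (k : ℕ) : Set ((ℤ × ℤ) × (ℤ × ℤ)) :=
  {dp | dp.1 ∈ Dirs ∧ IsPatternStart S k dp.1 dp.2}
lemma patternCount_eq (S : Finset (ℤ × ℤ)) (k : ℕ) : patternCount S k = (PStarts S k).ncard := rfl
lemma dirs_fst {d : ℤ × ℤ} (hd : d ∈ Dirs) : d.1 = 0 ∨ d.1 = 1 := by
  simp only [Dirs, Finset.mem_insert, Finset.mem_singleton] at hd
  rcases hd with h | h | h | h <;> subst h <;> norm_num
lemma start_mem {S : Finset (ℤ × ℤ)} {k : ℕ} (hk : 0 < k) {d p : ℤ × ℤ}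
    (h : IsPatternStart S k d p) : p ∈ S := by
  have := h.1 0 hk; simpa using this
lemma pset_finite (S : Finset (ℤ × ℤ)) {k : ℕ} (hk : 0 < k) : (PStarts S k).Finite := by
  apply (Set.Finite.prod Dirs.finite_toSet S.finite_toSet).subset
  rintro ⟨d, p⟩ ⟨hd, h⟩
  exact ⟨hd, start_mem hk h⟩
lemma x_add (p : ℤ × ℤ) (t : ℤ) (d : ℤ × ℤ) : (p + t • d).1 = p.1 + t * d.1 := by simp
lemma x_sub (p d : ℤ × ℤ) : (p - d).1 = p.1 - d.1 := rfl

lemma pstarts_union {S T : Finset (ℤ × ℤ)} {k : ℕ} (hk : 0 < k) {A : ℤ}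
    (hS : ∀ p ∈ S, p.1 ≤ A) (hT : ∀ p ∈ T, A + k + 2 ≤ p.1) :
    PStarts (S ∪ T) k = PStarts S k ∪ PStarts T k := by
  have hkk : (0:ℤ) ≤ k := Int.natCast_nonneg k
  ext ⟨d, p⟩
  simp only [PStarts, Set.mem_setOf_eq, Set.mem_union]
  constructor
  · rintro ⟨hd, hpat, hm, hp⟩
    have hd1 := dirs_fst hd
    have hd0 : 0 ≤ d.1 ∧ d.1 ≤ 1 := by rcases hd1 with h | h <;> rw [h] <;> norm_num
    have hp0 : p ∈ S ∪ T := by simpa using hpat 0 hk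
    rcases Finset.mem_union.1 hp0 with hpS | hpT
    · left
      refine ⟨hd, fun t ht => ?_, fun h => hm (Finset.mem_union_left _ h),
        fun h => hp (Finset.mem_union_left _ h)⟩
      rcases Finset.mem_union.1 (hpat t ht) with h | h
      · exact h
      · exfalso
        have h1 := hT _ h
        rw [x_add] at h1
        have h2 := hS p hpS
        have h3 : (t:ℤ) * d.1 ≤ k := by
          have ht' : (t:ℤ) ≤ k := by exact_mod_cast ht.le
          rcases hd1 with h0 | h0 <;> rw [h0] <;> nlinarith
        linarith
    · right
      refine ⟨hd, fun t ht => ?_, fun h => hm (Finset.mem_union_right _ h),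
        fun h => hp (Finset.mem_union_right _ h)⟩
      rcases Finset.mem_union.1 (hpat t ht) with h | h
      · exfalso
        have h1 := hS _ h
        rw [x_add] at h1
        have h2 := hT p hpT
        have h3 : (0:ℤ) ≤ (t:ℤ) * d.1 := mul_nonneg (Int.natCast_nonneg t) hd0.1
        linarith
      · exact h
  · rintro (⟨hd, hpat, hm, hp⟩ | ⟨hd, hpat, hm, hp⟩)
    · have hd0 : 0 ≤ d.1 ∧ d.1 ≤ 1 := by
        rcases dirs_fst hd with h | h <;> rw [h] <;> norm_num
      have hpS := hS _ (start_mem hk ⟨hpat, hm, hp⟩)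
      refine ⟨hd, fun t ht => Finset.mem_union_left _ (hpat t ht), ?_, ?_⟩
      · intro h
        rcases Finset.mem_union.1 h with h' | h'
        · exact hm h'
        · have := hT _ h'
          rw [x_sub] at this
          linarith
      · intro h
        rcases Finset.mem_union.1 h with h' | h'
        · exact hp h'
        · have := hT _ h'
          rw [x_add] at this
          have h3 : (k:ℤ) * d.1 ≤ k := by nlinarith
          linarith
    · have hd0 : 0 ≤ d.1 ∧ d.1 ≤ 1 := by
        rcases dirs_fst hd with h | h <;> rw [h] <;> norm_num
      have hpT := hT _ (start_mem hk ⟨hpat, hm, hp⟩)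
      refine ⟨hd, fun t ht => Finset.mem_union_right _ (hpat t ht), ?_, ?_⟩
      · intro h
        rcases Finset.mem_union.1 h with h' | h'
        · have := hS _ h'
          rw [x_sub] at this
          linarith
        · exact hm h'
      · intro h
        rcases Finset.mem_union.1 h with h' | h'
        · have := hS _ h'
          rw [x_add] at this
          have h3 : (0:ℤ) ≤ (k:ℤ) * d.1 := mul_nonneg hkk hd0.1
          linarith
        · exact hp h'

lemma pstarts_disjoint {S T : Finset (ℤ × ℤ)} {k : ℕ} (hk : 0 < k) {A : ℤ}
    (hS : ∀ p ∈ S, p.1 ≤ A) (hT : ∀ p ∈ T, A + k + 2 ≤ p.1) :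
    Disjoint (PStarts S k) (PStarts T k) := by
  have hkk : (0:ℤ) ≤ k := Int.natCast_nonneg k
  rw [Set.disjoint_left]
  rintro ⟨d, p⟩ ⟨_, h1⟩ ⟨_, h2⟩
  have := hS _ (start_mem hk h1)
  have := hT _ (start_mem hk h2)
  linarith

lemma patternCount_union {S T : Finset (ℤ × ℤ)} {k : ℕ} (hk : 0 < k) {A : ℤ}
    (hS : ∀ p ∈ S, p.1 ≤ A) (hT : ∀ p ∈ T, A + k + 2 ≤ p.1) :
    patternCount (S ∪ T) k = patternCount S k + patternCount T k := by
  rw [patternCount_eq, patternCount_eq, patternCount_eq, pstarts_union hk hS hT,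
    Set.ncard_union_eq (pstarts_disjoint hk hS hT) (pset_finite S hk) (pset_finite T hk)]

lemma mem_image_add {S : Finset (ℤ × ℤ)} {v x : ℤ × ℤ} :
    x + v ∈ S.image (fun p => p + v) ↔ x ∈ S := by
  simp only [Finset.mem_image]
  constructor
  · rintro ⟨a, ha, h⟩
    have : a = x := by
      have := add_right_cancel h
      exact this
    exact this ▸ ha
  · exact fun h => ⟨x, h, rfl⟩

lemma isPatternStart_translate {S : Finset (ℤ × ℤ)} {k : ℕ} {v d p : ℤ × ℤ} :
    IsPatternStart (S.image (fun q => q + v)) k d (p + v) ↔ IsPatternStart S k d p := by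
  unfold IsPatternStart
  have key : ∀ w : ℤ × ℤ, p + v + w = (p + w) + v := by intro w; abel
  constructor
  · rintro ⟨h1, h2, h3⟩
    refine ⟨fun t ht => ?_, fun h => h2 ?_, fun h => h3 ?_⟩
    · have := h1 t ht
      rw [key] at this
      exact mem_image_add.1 this
    · have : p + v - d = (p - d) + v := by abel
      rw [this]; exact mem_image_add.2 h
    · rw [key]; exact mem_image_add.2 h
  · rintro ⟨h1, h2, h3⟩
    refine ⟨fun t ht => ?_, fun h => h2 ?_, fun h => h3 ?_⟩
    · rw [key]; exact mem_image_add.2 (h1 t ht)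
    · have heq : p + v - d = (p - d) + v := by abel
      rw [heq] at h
      exact mem_image_add.1 h
    · rw [key] at h
      exact mem_image_add.1 h


lemma patternCount_translate (S : Finset (ℤ × ℤ)) (k : ℕ) (v : ℤ × ℤ) :
    patternCount (S.image (fun q => q + v)) k = patternCount S k := by
  rw [patternCount_eq, patternCount_eq]
  have himg : PStarts (S.image (fun q => q + v)) k
      = (fun dp : (ℤ × ℤ) × (ℤ × ℤ) => (dp.1, dp.2 + v)) '' PStarts S k := by
    ext ⟨d, p⟩
    simp only [Set.mem_image, PStarts, Set.mem_setOf_eq]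
    constructor
    · rintro ⟨hd, hps⟩
      refine ⟨(d, p - v), ⟨hd, ?_⟩, ?_⟩
      · have h1 : (p - v) + v = p := by abel
        rw [← isPatternStart_translate (v := v), h1]
        exact hps
      · show (d, (p - v) + v) = (d, p)
        have h1 : (p - v) + v = p := by abel
        rw [h1]
    · rintro ⟨⟨d', q⟩, ⟨hd, hps⟩, heq⟩
      have h1 : d' = d := congrArg Prod.fst heq
      have h2 : q + v = p := congrArg Prod.snd heq
      subst h1
      rw [← h2]
      exact ⟨hd, isPatternStart_translate.2 hps⟩
  rw [himg, Set.ncard_image_of_injective]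
  rintro ⟨d1, p1⟩ ⟨d2, p2⟩ h
  simp only [Prod.mk.injEq] at h
  exact Prod.ext h.1 (add_right_cancel h.2)

lemma patternCount_empty {k : ℕ} (hk : 0 < k) : patternCount ∅ k = 0 := by
  rw [patternCount_eq]
  convert Set.ncard_empty ((ℤ × ℤ) × (ℤ × ℤ))
  ext ⟨d, p⟩
  simp only [PStarts, Set.mem_setOf_eq, Set.mem_empty_iff_false, iff_false]
  rintro ⟨_, h1, _, _⟩
  simpa using h1 0 hk

def Seg (k : ℕ) : Finset (ℤ × ℤ) := (Finset.range k).image (fun t : ℕ => ((t : ℤ), 0))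

lemma mem_seg {k : ℕ} {p : ℤ × ℤ} : p ∈ Seg k ↔ 0 ≤ p.1 ∧ p.1 < k ∧ p.2 = 0 := by
  simp only [Seg, Finset.mem_image, Finset.mem_range]
  constructor
  · rintro ⟨t, ht, rfl⟩
    refine ⟨by simp, by simp; exact_mod_cast ht, rfl⟩
  · rintro ⟨h0, h1, h2⟩
    refine ⟨p.1.toNat, by omega, ?_⟩
    have h3 : (p.1.toNat : ℤ) = p.1 := Int.toNat_of_nonneg h0
    rw [h3]
    exact Prod.ext rfl h2.symm

lemma patternCount_seg {k : ℕ} (hk : 2 ≤ k) : patternCount (Seg k) k = 1 := by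
  rw [patternCount_eq]
  have hset : PStarts (Seg k) k = {(((1:ℤ), (0:ℤ)), ((0:ℤ), (0:ℤ)))} := by
    ext ⟨d, p⟩
    simp only [PStarts, Set.mem_setOf_eq, Set.mem_singleton_iff, Prod.mk.injEq]
    constructor
    · rintro ⟨hd, hpat, hm, hp⟩
      have h0 : p ∈ Seg k := by have := hpat 0 (by omega); simpa using this
      have h1 : p + d ∈ Seg k := by have := hpat 1 (by omega); simpa using this
      rw [mem_seg] at h0 h1
      simp only [Prod.fst_add, Prod.snd_add] at h1
      simp only [Dirs, Finset.mem_insert, Finset.mem_singleton] at hd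
      rcases hd with rfl | rfl | rfl | rfl
      · -- d = (1,0)
        rw [mem_seg] at hm
        simp only [Prod.fst_sub, Prod.snd_sub] at hm
        push_neg at hm
        have hp1 : p.1 = 0 := by
          by_cases hc : (0:ℤ) ≤ p.1 - 1
          · have := hm hc (by omega)
            simp at this
            omega
          · omega
        exact ⟨rfl, Prod.ext hp1 h0.2.2⟩
      · exfalso; simp at h1; omega
      · exfalso; simp at h1; omega
      · exfalso; simp at h1; omega
    · rintro ⟨rfl, rfl⟩
      refine ⟨by simp [Dirs], fun t ht => ?_, ?_, ?_⟩
      · rw [mem_seg]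
        refine ⟨?_, ?_, ?_⟩ <;> simp
        exact_mod_cast ht
      · rw [mem_seg]; simp
      · rw [mem_seg]; simp
  rw [hset, Set.ncard_singleton]



lemma exists_ub (S : Finset (ℤ × ℤ)) : ∃ A : ℤ, ∀ p ∈ S, p.1 ≤ A := by
  obtain ⟨A, hA⟩ := (S.finite_toSet.image (fun p => p.1)).bddAbove
  exact ⟨A, fun p hp => hA ⟨p, hp, rfl⟩⟩

lemma exists_lb (S : Finset (ℤ × ℤ)) : ∃ C : ℤ, ∀ p ∈ S, C ≤ p.1 := by
  obtain ⟨C, hC⟩ := (S.finite_toSet.image (fun p => p.1)).bddBelow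
  exact ⟨C, fun p hp => hC ⟨p, hp, rfl⟩⟩

lemma exists_count {k : ℕ} (hk : 2 ≤ k) (n : ℕ) :
    ∃ S : Finset (ℤ × ℤ), patternCount S k = n := by
  induction n with
  | zero => exact ⟨∅, patternCount_empty (by omega)⟩
  | succ n ih =>
    obtain ⟨S, hS⟩ := ih
    obtain ⟨A, hA⟩ := exists_ub S
    set T : Finset (ℤ × ℤ) := (Seg k).image (fun q => q + (A + k + 2, 0)) with hTdef
    have hT : ∀ p ∈ T, A + k + 2 ≤ p.1 := by
      intro p hp
      rw [hTdef, Finset.mem_image] at hp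
      obtain ⟨q, hq, rfl⟩ := hp
      rw [mem_seg] at hq
      have : (q + ((A + k + 2 : ℤ), (0:ℤ))).1 = q.1 + (A + k + 2) := rfl
      rw [this]
      linarith [hq.1]
    refine ⟨S ∪ T, ?_⟩
    rw [patternCount_union (by omega) hA hT, hS, hTdef,
      patternCount_translate, patternCount_seg hk]

theorem stmt5 (k : ℕ) (hk : 2 ≤ k) :
    ∀ n m : ℕ, minPoints k (n + m) ≤ minPoints k n + minPoints k m := by
  intro n m
  have hne : ∀ j : ℕ, {c | ∃ S : Finset (ℤ × ℤ), patternCount S k = j ∧ S.card = c}.Nonempty := by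
    intro j
    obtain ⟨S, hS⟩ := exists_count hk j
    exact ⟨S.card, S, hS, rfl⟩
  obtain ⟨S, hScount, hScard⟩ := Nat.sInf_mem (hne n)
  obtain ⟨T, hTcount, hTcard⟩ := Nat.sInf_mem (hne m)
  obtain ⟨A, hA⟩ := exists_ub S
  obtain ⟨C, hC⟩ := exists_lb T
  set T' : Finset (ℤ × ℤ) := T.image (fun q => q + (A + k + 2 - C, 0)) with hT'def
  have hT' : ∀ p ∈ T', A + k + 2 ≤ p.1 := by
    intro p hp
    rw [hT'def, Finset.mem_image] at hp
    obtain ⟨q, hq, rfl⟩ := hp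
    have : (q + ((A + k + 2 - C : ℤ), (0:ℤ))).1 = q.1 + (A + k + 2 - C) := rfl
    rw [this]
    linarith [hC q hq]
  have hcount : patternCount (S ∪ T') k = n + m := by
    rw [patternCount_union (by omega) hA hT', hScount, hT'def,
      patternCount_translate, hTcount]
  have h1 : minPoints k (n + m) ≤ (S ∪ T').card :=
    Nat.sInf_le ⟨S ∪ T', hcount, rfl⟩
  have h2 : (S ∪ T').card ≤ S.card + T'.card := Finset.card_union_le _ _
  have h3 : T'.card ≤ T.card := Finset.card_image_le
  calc minPoints k (n + m) ≤ S.card + T'.card := le_trans h1 h2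
    _ ≤ S.card + T.card := by omega
    _ = minPoints k n + minPoints k m := by rw [hScard, hTcard]; rfl
end

section
/- For every integer n ≥ 1, the minimum cardinality of a finite set S ⊆ ℤ×ℤ having exactly 4n patterns of length 1 is n; that is, a_1(4n) = n. Consequently a_1(4n)/(4n) converges to 1/4 as n → ∞. -/
open Finset Filter

lemma patternCount_le (S : Finset (ℤ × ℤ)) : patternCount S 1 ≤ 4 * S.card := by
  have hsub : {dp : (ℤ × ℤ) × (ℤ × ℤ) | dp.1 ∈ Dirs ∧ IsPatternStart S 1 dp.1 dp.2}
      ⊆ ↑(Dirs ×ˢ S) := by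
    rintro ⟨d, p⟩ ⟨hd, hps, _⟩
    have hp := hps 0 (by norm_num)
    simp only [Nat.cast_zero, zero_smul, add_zero] at hp
    simp [Finset.mem_product, hd, hp]
  have hDirs : Dirs.card = 4 := by decide
  calc patternCount S 1 ≤ (Dirs ×ˢ S : Finset _).card := by
        rw [← Set.ncard_coe_finset]
        exact Set.ncard_le_ncard hsub (Finset.finite_toSet _)
    _ = 4 * S.card := by rw [Finset.card_product, hDirs]

def pts (n : ℕ) : Finset (ℤ × ℤ) := (Finset.range n).image (fun i : ℕ => ((3*(i:ℤ), 0) : ℤ × ℤ))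

lemma pts_card (n : ℕ) : (pts n).card = n := by
  rw [pts, Finset.card_image_of_injective _ ?_, Finset.card_range]
  intro a b h
  simp only [Prod.ext_iff] at h
  omega

lemma pts_isolated {n : ℕ} {p d : ℤ × ℤ} (hp : p ∈ pts n) (hd : d ∈ Dirs) :
    p + d ∉ pts n ∧ p - d ∉ pts n := by
  simp only [pts, Finset.mem_image, Finset.mem_range] at hp ⊢
  obtain ⟨i, hi, rfl⟩ := hp
  fin_cases hd <;>
  constructor <;>
  · rintro ⟨j, hj, hEq⟩
    simp only [Prod.ext_iff, Prod.fst_add, Prod.snd_add, Prod.fst_sub, Prod.snd_sub] at hEq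
    omega

lemma patternCount_pts (n : ℕ) : patternCount (pts n) 1 = 4 * n := by
  have hset : {dp : (ℤ × ℤ) × (ℤ × ℤ) | dp.1 ∈ Dirs ∧ IsPatternStart (pts n) 1 dp.1 dp.2}
      = ↑(Dirs ×ˢ pts n) := by
    ext ⟨d, p⟩
    simp only [Set.mem_setOf_eq, Finset.coe_product, Set.mem_prod, Finset.mem_coe]
    constructor
    · rintro ⟨hd, hps, _⟩
      have hp := hps 0 (by norm_num)
      simp only [Nat.cast_zero, zero_smul, add_zero] at hp
      exact ⟨hd, hp⟩
    · rintro ⟨hd, hp⟩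
      obtain ⟨h1, h2⟩ := pts_isolated hp hd
      refine ⟨hd, ?_, h2, ?_⟩
      · intro t ht; interval_cases t; simpa using hp
      · simpa using h1
  have hDirs : Dirs.card = 4 := by decide
  rw [patternCount, hset, Set.ncard_coe_finset, Finset.card_product, pts_card, hDirs]

theorem stmt7 :
    (∀ n : ℕ, 1 ≤ n → minPoints 1 (4 * n) = n) ∧
    Tendsto (fun n : ℕ => (minPoints 1 (4 * n) : ℝ) / (4 * n)) atTop (nhds (1 / 4)) := by
  constructor
  · intro n hn
    have hmem : n ∈ {c | ∃ S : Finset (ℤ × ℤ), patternCount S 1 = 4 * n ∧ S.card = c} :=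
      ⟨pts n, patternCount_pts n, pts_card n⟩
    apply le_antisymm
    · exact Nat.sInf_le hmem
    · apply le_csInf ⟨n, hmem⟩
      rintro c ⟨S, hPC, rfl⟩
      have := patternCount_le S
      omega
  · have hmain : ∀ n : ℕ, 1 ≤ n → minPoints 1 (4 * n) = n := by
      intro n hn
      have hmem : n ∈ {c | ∃ S : Finset (ℤ × ℤ), patternCount S 1 = 4 * n ∧ S.card = c} :=
        ⟨pts n, patternCount_pts n, pts_card n⟩
      apply le_antisymm
      · exact Nat.sInf_le hmem
      · apply le_csInf ⟨n, hmem⟩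
        rintro c ⟨S, hPC, rfl⟩
        have := patternCount_le S
        omega
    have heq : ∀ᶠ n : ℕ in atTop,
        ((1:ℝ)/4) = (minPoints 1 (4 * n) : ℝ) / (4 * n) := by
      filter_upwards [eventually_ge_atTop 1] with n hn
      rw [hmain n hn]
      have hn0 : (n:ℝ) ≠ 0 := by
        exact_mod_cast Nat.one_le_iff_ne_zero.mp hn
      field_simp
    exact tendsto_const_nhds.congr' heq
end

section
/- Let k ≥ 2 be an integer. If there exists a permutation σ of ZMod (k+1) such that the maps i ↦ i + σ(i) and i ↦ i - σ(i) on ZMod (k+1) are both bijective, then a_k(n)/n converges to k/4 as n → ∞. -/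
/-!
A point of `S` lies in at most one pattern per direction, so `k P_k(S) ≤ 4 |S|` and
`a_k(n) ≥ k n / 4`. Conversely, for `σ ∈ T_{k+1}` the periodically repeated queens `(i, σ i)`
meet every line in the four directions exactly once in every `k + 1` consecutive points.
Removing them from a square of side `(k + 1) m` leaves `k (k + 1) m²` points, and every queen
away from the border is followed in each direction by a run of exactly `k` free points, giving
`4 (k + 1) m² - O(m)` patterns. Adding `O(m)` isolated horizontal segments of length `k`, one
pattern each, brings the count to exactly `n`, so `a_k(n) ≤ k n / 4 + O(√n)`.
-/

open Finset Filter

instance (S : Finset (ℤ × ℤ)) (k : ℕ) (d : ℤ × ℤ) : DecidablePred (IsPatternStart S k d) :=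
  fun _ => inferInstanceAs (Decidable (_ ∧ _ ∧ _))

lemma card_dirs : Dirs.card = 4 := rfl

lemma mem_dirs {d : ℤ × ℤ} : d ∈ Dirs ↔ d = (1, 0) ∨ d = (0, 1) ∨ d = (1, 1) ∨ d = (1, -1) := by
  simp [Dirs]

def patternStarts (S : Finset (ℤ × ℤ)) (k : ℕ) : Finset ((ℤ × ℤ) × (ℤ × ℤ)) :=
  (Dirs ×ˢ S).filter fun dp => IsPatternStart S k dp.1 dp.2

section Patterns

variable {S : Finset (ℤ × ℤ)} {k : ℕ} {d p q : ℤ × ℤ}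

lemma IsPatternStart.mem (h : IsPatternStart S k d p) (hk : 0 < k) : p ∈ S := by
  simpa using h.1 0 hk

lemma mem_patternStarts (hk : 0 < k) :
    (d, p) ∈ patternStarts S k ↔ d ∈ Dirs ∧ IsPatternStart S k d p := by
  simp only [patternStarts, mem_filter, mem_product]
  exact ⟨fun h => ⟨h.1.1, h.2⟩, fun h => ⟨⟨h.1, h.2.mem hk⟩, h.2⟩⟩

lemma patternCount_eq_card (hk : 0 < k) : patternCount S k = (patternStarts S k).card := by
  rw [patternCount, ← Set.ncard_coe_finset]
  congr 1
  ext ⟨d, p⟩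
  exact (mem_patternStarts hk).symm

/-- If `s < t`, the start `p = q + (t - s) • d` would have its predecessor `p - d` in `S`. -/
lemma IsPatternStart.not_lt_of_add_smul_eq (hp : IsPatternStart S k d p)
    (hq : IsPatternStart S k d q) {s t : ℕ} (ht : t < k)
    (h : p + (s : ℤ) • d = q + (t : ℤ) • d) : ¬ s < t := by
  intro hst
  apply hp.2.1
  have hpd : p - d = q + ((t - s - 1 : ℕ) : ℤ) • d := by
    rw [Nat.sub_sub, Nat.cast_sub (by omega)]
    push_cast
    linear_combination (norm := module) h
  rw [hpd]
  exact hq.1 _ (by omega)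

lemma IsPatternStart.eq_of_add_smul_eq (hp : IsPatternStart S k d p)
    (hq : IsPatternStart S k d q) {s t : ℕ} (hs : s < k) (ht : t < k)
    (h : p + (s : ℤ) • d = q + (t : ℤ) • d) : p = q ∧ s = t := by
  have hst : s = t := by
    have := hp.not_lt_of_add_smul_eq hq ht h
    have := hq.not_lt_of_add_smul_eq hp hs h.symm
    omega
  subst hst
  exact ⟨add_right_cancel h, rfl⟩

theorem patternCount_mul_le (S : Finset (ℤ × ℤ)) (k : ℕ) :
    patternCount S k * k ≤ 4 * S.card := by
  rcases Nat.eq_zero_or_pos k with rfl | hk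
  · simp
  calc patternCount S k * k = (patternStarts S k ×ˢ range k).card := by
        rw [patternCount_eq_card hk, card_product, card_range]
    _ ≤ (Dirs ×ˢ S).card :=
        card_le_card_of_injOn (fun x => (x.1.1, x.1.2 + (x.2 : ℤ) • x.1.1)) ?_ ?_
    _ = 4 * S.card := by rw [card_product, card_dirs]
  · rintro ⟨⟨d, p⟩, t⟩ h
    simp only [coe_product, Set.mem_prod, mem_coe, mem_range, mem_patternStarts hk] at h ⊢
    exact ⟨h.1.1, h.1.2.1 t h.2⟩
  · rintro ⟨⟨d, p⟩, s⟩ hs ⟨⟨d', q⟩, t⟩ ht h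
    simp only [coe_product, Set.mem_prod, mem_coe, mem_range, mem_patternStarts hk] at hs ht
    simp only [Prod.mk.injEq] at h
    obtain ⟨rfl, h⟩ := h
    obtain ⟨rfl, rfl⟩ := hs.1.2.eq_of_add_smul_eq ht.1.2 hs.2 ht.2 h
    rfl

end Patterns

def Apart (A B : Finset (ℤ × ℤ)) : Prop :=
  Disjoint A B ∧ ∀ a ∈ A, ∀ b ∈ B, ∀ d ∈ Dirs, a + d ≠ b ∧ b + d ≠ a

section Union

variable {A B : Finset (ℤ × ℤ)} {k : ℕ} {d p : ℤ × ℤ}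

lemma Apart.symm (h : Apart A B) : Apart B A :=
  ⟨h.1.symm, fun b hb a ha d hd => (h.2 a ha b hb d hd).symm⟩

lemma apart_of_snd_add_one_lt (h : ∀ a ∈ A, ∀ b ∈ B, b.2 + 1 < a.2) : Apart A B := by
  refine ⟨disjoint_left.2 fun a ha hb => by linarith [h a ha a hb], fun a ha b hb d hd => ?_⟩
  have hab := h a ha b hb
  constructor <;> rintro rfl <;> rcases mem_dirs.1 hd with rfl | rfl | rfl | rfl <;>
    simp at hab <;> omega

lemma IsPatternStart.union_left (hAB : Apart A B) (hk : 0 < k) (hd : d ∈ Dirs)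
    (hp : IsPatternStart A k d p) : IsPatternStart (A ∪ B) k d p := by
  refine ⟨fun t ht => mem_union_left _ (hp.1 t ht), ?_, ?_⟩
  · rw [mem_union, not_or]
    refine ⟨hp.2.1, fun hB => (hAB.2 p (hp.mem hk) _ hB d hd).2 (sub_add_cancel p d)⟩
  · rw [mem_union, not_or]
    refine ⟨hp.2.2, fun hB => (hAB.2 _ (hp.1 (k - 1) (by omega)) _ hB d hd).1 ?_⟩
    rw [Nat.cast_sub hk]
    module

lemma IsPatternStart.of_union_left (hAB : Apart A B) (hd : d ∈ Dirs)
    (hp : IsPatternStart (A ∪ B) k d p) (hpA : p ∈ A) : IsPatternStart A k d p := by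
  refine ⟨fun t ht => ?_, fun h => hp.2.1 (mem_union_left _ h),
    fun h => hp.2.2 (mem_union_left _ h)⟩
  induction t with
  | zero => simpa using hpA
  | succ t ih =>
    refine (mem_union.1 (hp.1 _ ht)).resolve_right fun hB => ?_
    refine (hAB.2 _ (ih (by omega)) _ hB d hd).1 ?_
    push_cast
    module

lemma patternStarts_union (hAB : Apart A B) (hk : 0 < k) :
    patternStarts (A ∪ B) k = patternStarts A k ∪ patternStarts B k := by
  ext ⟨d, p⟩
  simp only [mem_union, mem_patternStarts hk]
  constructor
  · rintro ⟨hd, hp⟩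
    rcases mem_union.1 (hp.mem hk) with hpA | hpB
    · exact .inl ⟨hd, hp.of_union_left hAB hd hpA⟩
    · rw [union_comm] at hp
      exact .inr ⟨hd, hp.of_union_left hAB.symm hd hpB⟩
  · rintro (⟨hd, hp⟩ | ⟨hd, hp⟩)
    · exact ⟨hd, hp.union_left hAB hk hd⟩
    · exact ⟨hd, union_comm A B ▸ hp.union_left hAB.symm hk hd⟩

lemma patternCount_union_s8 (hAB : Apart A B) (hk : 0 < k) :
    patternCount (A ∪ B) k = patternCount A k + patternCount B k := by
  simp only [patternCount_eq_card hk, patternStarts_union hAB hk]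
  refine card_union_of_disjoint (disjoint_left.2 fun ⟨d, p⟩ hA hB => ?_)
  rw [mem_patternStarts hk] at hA hB
  exact disjoint_left.1 hAB.1 (hA.2.mem hk) (hB.2.mem hk)

end Union

noncomputable def horizSegment (k : ℕ) (y : ℤ) : Finset (ℤ × ℤ) := Ico 0 (k : ℤ) ×ˢ {y}

noncomputable def horizSegments (k : ℕ) : ℕ → Finset (ℤ × ℤ)
  | 0 => ∅
  | r + 1 => horizSegments k r ∪ horizSegment k (-3 * (r + 1))

section Segments

variable {k : ℕ} {y : ℤ}

lemma mem_horizSegment {p : ℤ × ℤ} : p ∈ horizSegment k y ↔ 0 ≤ p.1 ∧ p.1 < k ∧ p.2 = y := by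
  rw [horizSegment, mem_product, mem_Ico, mem_singleton, and_assoc]

lemma patternStarts_horizSegment (hk : 2 ≤ k) :
    patternStarts (horizSegment k y) k = {((1, 0), (0, y))} := by
  ext ⟨d, p⟩
  rw [mem_patternStarts (by omega), mem_singleton, Prod.mk.injEq]
  constructor
  · rintro ⟨hd, hp⟩
    have h0 := mem_horizSegment.1 (hp.mem (by omega))
    have h1 := mem_horizSegment.1 (hp.1 1 (by omega))
    have h2 := mt mem_horizSegment.2 hp.2.1
    rcases mem_dirs.1 hd with rfl | rfl | rfl | rfl
    · simp only [Prod.fst_sub, Prod.snd_sub, sub_zero, not_and] at h0 h2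
      exact ⟨rfl, Prod.ext (by simp; omega) h0.2.2⟩
    all_goals simp at h0 h1; omega
  · rintro ⟨rfl, rfl⟩
    refine ⟨by decide, fun t ht => ?_, ?_, ?_⟩ <;> simp [mem_horizSegment]
    omega

lemma patternCount_horizSegment (hk : 2 ≤ k) : patternCount (horizSegment k y) k = 1 := by
  rw [patternCount_eq_card (by omega), patternStarts_horizSegment hk, card_singleton]

lemma snd_mem_Icc_of_mem_horizSegments {r : ℕ} {p : ℤ × ℤ} (hp : p ∈ horizSegments k r) :
    p.2 ∈ Icc (-3 * r : ℤ) (-3) := by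
  rw [mem_Icc]
  induction r with
  | zero => simp [horizSegments] at hp
  | succ r ih =>
    rcases mem_union.1 hp with hp | hp
    · have := ih hp
      push_cast
      omega
    · have := (mem_horizSegment.1 hp).2.2
      push_cast
      omega

lemma apart_horizSegments (r : ℕ) : Apart (horizSegments k r) (horizSegment k (-3 * (r + 1))) :=
  apart_of_snd_add_one_lt fun a ha b hb => by
    have := mem_Icc.1 (snd_mem_Icc_of_mem_horizSegments ha)
    have := (mem_horizSegment.1 hb).2.2
    omega

lemma patternCount_horizSegments (hk : 2 ≤ k) (r : ℕ) : patternCount (horizSegments k r) k = r := by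
  induction r with
  | zero => simp [horizSegments, patternCount_eq_card (show 0 < k by omega), patternStarts]
  | succ r ih =>
    rw [horizSegments, patternCount_union_s8 (apart_horizSegments r) (by omega), ih,
      patternCount_horizSegment hk]

lemma card_horizSegments (r : ℕ) : (horizSegments k r).card = r * k := by
  induction r with
  | zero => simp [horizSegments]
  | succ r ih =>
    rw [horizSegments, card_union_of_disjoint (apart_horizSegments r).1, ih]
    simp [horizSegment]
    ring

end Segments

section Queens

variable {n : ℕ} {σ : Equiv.Perm (ZMod n)} {d q : ℤ × ℤ}

/-- `T_n`; equivalently, the points `(i, σ i)` are `n` non-attacking queens on the `n × n` torus. -/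
def IsToroidalQueens (σ : Equiv.Perm (ZMod n)) : Prop :=
  Function.Bijective (fun i => i + σ i) ∧ Function.Bijective (fun i => i - σ i)

/-- `p` is one of the queens of `σ`, repeated periodically over `ℤ × ℤ`. -/
def IsQueen (σ : Equiv.Perm (ZMod n)) (p : ℤ × ℤ) : Prop := σ p.1 = p.2

instance : DecidablePred (IsQueen σ) := fun _ => inferInstanceAs (Decidable (_ = _))

lemma IsQueen.add_smul_iff (hσ : IsToroidalQueens σ) (hd : d ∈ Dirs) (hq : IsQueen σ q)
    (t : ℤ) : IsQueen σ (q + t • d) ↔ (t : ZMod n) = 0 := by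
  unfold IsQueen at hq ⊢
  set x : ZMod n := (q.1 : ZMod n)
  rcases mem_dirs.1 hd with rfl | rfl | rfl | rfl <;> simp only [Prod.fst_add, Prod.snd_add,
    Prod.smul_mk, smul_eq_mul, mul_one, mul_zero, mul_neg, add_zero, Int.cast_add, Int.cast_sub,
    ← sub_eq_add_neg] <;> rw [← hq]
  · rw [σ.injective.eq_iff, add_eq_left]
  · rw [left_eq_add]
  · calc σ (x + t) = σ x + t ↔ x + t - σ (x + t) = x - σ x := by
          constructor <;> intro h <;> linear_combination -h
      _ ↔ x + t = x := hσ.2.injective.eq_iff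
      _ ↔ (t : ZMod n) = 0 := add_eq_left
  · calc σ (x + t) = σ x - t ↔ x + t + σ (x + t) = x + σ x := by
          constructor <;> intro h <;> linear_combination h
      _ ↔ x + t = x := hσ.1.injective.eq_iff
      _ ↔ (t : ZMod n) = 0 := add_eq_left

end Queens

noncomputable def square (N : ℕ) : Finset (ℤ × ℤ) := Ico 0 (N : ℤ) ×ˢ Ico 0 (N : ℤ)

section Square

variable {N : ℕ} {p d : ℤ × ℤ}

lemma mem_square : p ∈ square N ↔ 0 ≤ p.1 ∧ p.1 < N ∧ 0 ≤ p.2 ∧ p.2 < N := by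
  rw [square, mem_product, mem_Ico, mem_Ico, and_assoc]

lemma card_square (N : ℕ) : (square N).card = N * N := by
  simp [square]

lemma add_smul_mem_square (hd : d ∈ Dirs) (hp : p ∈ square N) {L : ℤ}
    (hpL : p + L • d ∈ square N) {s : ℤ} (hs : 0 ≤ s) (hsL : s ≤ L) : p + s • d ∈ square N := by
  rw [mem_square] at hp hpL ⊢
  rcases mem_dirs.1 hd with rfl | rfl | rfl | rfl <;> simp at hpL ⊢ <;> omega

/-- Points of the square leaving it after `L` steps lie in three strips of width `L`. -/
lemma card_exits_square_le (N L : ℕ) :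
    ((Dirs ×ˢ square N).filter fun x => x.2 + (L : ℤ) • x.1 ∉ square N).card ≤ 12 * (L * N) := by
  let strips := Ico (N - L : ℤ) N ×ˢ Ico 0 (N : ℤ) ∪ Ico 0 (N : ℤ) ×ˢ Ico (N - L : ℤ) N ∪
    Ico 0 (N : ℤ) ×ˢ Ico 0 (L : ℤ)
  have hsub : ((Dirs ×ˢ square N).filter fun x => x.2 + (L : ℤ) • x.1 ∉ square N) ⊆
      Dirs ×ˢ strips := by
    rintro ⟨d, p⟩ h
    simp only [mem_filter, mem_product, mem_square] at h
    obtain ⟨⟨hd, hp⟩, hpL⟩ := h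
    simp only [strips, mem_product, mem_union, mem_Ico]
    refine ⟨hd, ?_⟩
    rcases mem_dirs.1 hd with rfl | rfl | rfl | rfl <;> simp at hpL <;> omega
  have hstrips : strips.card ≤ 3 * (L * N) := by
    grw [card_union_le, card_union_le]
    simp only [card_product, Int.card_Ico, sub_zero, sub_sub_cancel, Int.toNat_natCast]
    rw [Nat.mul_comm N L]
    omega
  calc _ ≤ (Dirs ×ˢ strips).card := card_le_card hsub
    _ ≤ 12 * (L * N) := by rw [card_product, card_dirs]; omega

end Square

section QueenBlock

variable {n : ℕ} (σ : Equiv.Perm (ZMod n)) (m : ℕ)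

noncomputable def queens : Finset (ℤ × ℤ) := (square (n * m)).filter (IsQueen σ)

noncomputable def queenBlock : Finset (ℤ × ℤ) := (square (n * m)).filter fun p => ¬ IsQueen σ p

lemma card_queenBlock_add_card_queens :
    (queenBlock σ m).card + (queens σ m).card = n * m * (n * m) := by
  rw [add_comm, queens, queenBlock, card_filter_add_card_filter_not, card_square]

/-- Each column of the square meets `m` queens, namely at the heights `σ x + n j`, `j < m`. -/
lemma mul_le_card_queens [NeZero n] : n * m * m ≤ (queens σ m).card := by
  calc n * m * m = (Ico 0 ((n * m : ℕ) : ℤ) ×ˢ range m).card := by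
        rw [card_product, Int.card_Ico, sub_zero, Int.toNat_natCast, card_range]
    _ ≤ (queens σ m).card := by
      refine card_le_card_of_injOn (fun x => (x.1, ((σ x.1).val : ℤ) + n * x.2)) ?_ ?_
      · rintro ⟨x, j⟩ h
        simp only [coe_product, Set.mem_prod, mem_coe, mem_Ico, mem_range] at h
        have hval := (σ x).val_lt
        have hj : (j : ℤ) + 1 ≤ m := by exact_mod_cast h.2
        simp only [queens, coe_filter, Set.mem_ofPred_eq, mem_square, IsQueen]
        refine ⟨⟨h.1.1, h.1.2, by positivity, ?_⟩, by simp⟩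
        push_cast at h ⊢
        nlinarith
      · rintro ⟨x, j⟩ _ ⟨x', j'⟩ _ h
        simp only [Prod.mk.injEq] at h
        obtain ⟨rfl, h⟩ := h
        have : (n : ℤ) * j = n * j' := by linarith
        simp_all [NeZero.ne n]

end QueenBlock

section BlockPatterns

variable {k : ℕ} {σ : Equiv.Perm (ZMod (k + 1))} {m : ℕ}

lemma isPatternStart_queenBlock (hσ : IsToroidalQueens σ) {d r : ℤ × ℤ} (hd : d ∈ Dirs)
    (hr : r ∈ queens σ m) (hr' : r + ((k + 1 : ℕ) : ℤ) • d ∈ square ((k + 1) * m)) :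
    IsPatternStart (queenBlock σ m) k d (r + d) := by
  rw [queens, mem_filter] at hr
  have hline := hr.2.add_smul_iff hσ hd
  simp only [IsPatternStart, queenBlock, mem_filter, not_and, not_not]
  refine ⟨fun t ht => ?_, fun _ => by simpa using hr.2, fun _ => ?_⟩
  · have e : r + d + (t : ℤ) • d = r + ((t + 1 : ℕ) : ℤ) • d := by push_cast; module
    rw [e, hline, Int.cast_natCast, ZMod.natCast_eq_zero_iff]
    exact ⟨add_smul_mem_square hd hr.1 hr' (by positivity) (by omega),
      Nat.not_dvd_of_pos_of_lt (by omega) (by omega)⟩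
  · have e : r + d + (k : ℤ) • d = r + ((k + 1 : ℕ) : ℤ) • d := by push_cast; module
    rw [e, hline, Int.cast_natCast, ZMod.natCast_self]

lemma four_mul_card_queens_le (hσ : IsToroidalQueens σ) (hk : 0 < k) :
    4 * (queens σ m).card ≤
      patternCount (queenBlock σ m) k + 12 * ((k + 1) * ((k + 1) * m)) := by
  let stays (x : (ℤ × ℤ) × (ℤ × ℤ)) : Prop := x.2 + ((k + 1 : ℕ) : ℤ) • x.1 ∈ square ((k + 1) * m)
  have hstay : ((Dirs ×ˢ queens σ m).filter stays).card ≤ patternCount (queenBlock σ m) k := by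
    rw [patternCount_eq_card hk]
    refine card_le_card_of_injOn (fun x => (x.1, x.2 + x.1)) ?_ ?_
    · rintro ⟨d, r⟩ h
      simp only [coe_filter, mem_product, Set.mem_ofPred_eq] at h
      exact (mem_patternStarts hk).2 ⟨h.1.1, isPatternStart_queenBlock hσ h.1.1 h.1.2 h.2⟩
    · rintro ⟨d, r⟩ _ ⟨d', r'⟩ _ h
      simp only [Prod.mk.injEq] at h
      obtain ⟨rfl, h⟩ := h
      rw [add_right_cancel h]
  have hexit : ((Dirs ×ˢ queens σ m).filter fun x => ¬ stays x).card ≤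
      12 * ((k + 1) * ((k + 1) * m)) :=
    (card_le_card (filter_subset_filter _ (product_subset_product_right (filter_subset _ _)))).trans
      (card_exits_square_le _ _)
  have hsplit := card_filter_add_card_filter_not (s := Dirs ×ˢ queens σ m) (p := stays)
  rw [card_product, card_dirs] at hsplit
  omega

end BlockPatterns

section QueenBlockEstimates

variable {k : ℕ} {σ : Equiv.Perm (ZMod (k + 1))}

lemma card_queenBlock_le (m : ℕ) : (queenBlock σ m).card ≤ k * ((k + 1) * m ^ 2) := by
  have h := card_queenBlock_add_card_queens σ m
  have hq := mul_le_card_queens σ m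
  have e : (k + 1) * m * ((k + 1) * m) = k * ((k + 1) * m ^ 2) + (k + 1) * m * m := by ring
  omega

lemma patternCount_queenBlock_le (hk : 0 < k) (m : ℕ) :
    patternCount (queenBlock σ m) k ≤ 4 * ((k + 1) * m ^ 2) := by
  refine Nat.le_of_mul_le_mul_right ?_ hk
  calc patternCount (queenBlock σ m) k * k ≤ 4 * (queenBlock σ m).card := patternCount_mul_le _ _
    _ ≤ 4 * (k * ((k + 1) * m ^ 2)) := by grw [card_queenBlock_le]
    _ = 4 * ((k + 1) * m ^ 2) * k := by ring

lemma le_patternCount_queenBlock (hσ : IsToroidalQueens σ) (hk : 0 < k) (m : ℕ) :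
    4 * ((k + 1) * m ^ 2) ≤ patternCount (queenBlock σ m) k + 12 * ((k + 1) * ((k + 1) * m)) := by
  have := four_mul_card_queens_le (m := m) hσ hk
  have := mul_le_card_queens σ m
  have e : (k + 1) * m ^ 2 = (k + 1) * m * m := by ring
  omega

end QueenBlockEstimates

section MinPoints

variable {k : ℕ}

lemma mul_le_four_mul_minPoints (hk : 2 ≤ k) (n : ℕ) : n * k ≤ 4 * minPoints k n := by
  have hne : {c | ∃ S : Finset (ℤ × ℤ), patternCount S k = n ∧ S.card = c}.Nonempty :=
    ⟨_, horizSegments k n, patternCount_horizSegments hk n, rfl⟩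
  obtain ⟨S, hS, hcard⟩ := Nat.sInf_mem hne
  rw [minPoints, ← hcard, ← hS]
  exact patternCount_mul_le S k

/-- Horizontal segments below `S` add one pattern each without interacting with `S`. -/
lemma minPoints_add_le (hk : 2 ≤ k) {S : Finset (ℤ × ℤ)} (hS : ∀ p ∈ S, 0 ≤ p.2) (r : ℕ) :
    minPoints k (patternCount S k + r) ≤ S.card + r * k := by
  have hapart : Apart S (horizSegments k r) := apart_of_snd_add_one_lt fun a ha b hb => by
    have := hS a ha
    have := (mem_Icc.1 (snd_mem_Icc_of_mem_horizSegments hb)).2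
    omega
  refine Nat.sInf_le ⟨S ∪ horizSegments k r, ?_, ?_⟩
  · rw [patternCount_union_s8 hapart (by omega), patternCount_horizSegments hk]
  · rw [card_union_of_disjoint hapart.1, card_horizSegments]

/-- With `m = ⌊√(n / 4(k+1))⌋` the block has at most `n` patterns and misses `n` by only `O(m)`,
so `O(√n)` segments complete it. -/
lemma four_mul_minPoints_le {σ : Equiv.Perm (ZMod (k + 1))} (hσ : IsToroidalQueens σ)
    (hk : 2 ≤ k) (n : ℕ) :
    4 * minPoints k n ≤ k * n + 80 * k * (k + 1) ^ 2 * (Nat.sqrt n + 1) := by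
  set m := Nat.sqrt (n / (4 * (k + 1)))
  set P := patternCount (queenBlock σ m) k
  have hmn : m ≤ Nat.sqrt n := Nat.sqrt_le_sqrt (Nat.div_le_self _ _)
  have hm_le : 4 * ((k + 1) * m ^ 2) ≤ n := by
    have := (Nat.le_div_iff_mul_le (by omega)).1 (Nat.sqrt_le' (n / (4 * (k + 1))))
    linarith
  have hm_lt : n < 4 * ((k + 1) * (m + 1) ^ 2) := by
    have := Nat.lt_mul_of_div_lt (Nat.lt_succ_sqrt' (n / (4 * (k + 1)))) (by omega)
    linarith
  have hP_le := patternCount_queenBlock_le (σ := σ) (by omega) m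
  have hP_ge := le_patternCount_queenBlock hσ (by omega) m
  have hrest : n - P ≤ 20 * (k + 1) ^ 2 * (m + 1) := by
    have e : 4 * ((k + 1) * (m + 1) ^ 2) =
        4 * ((k + 1) * m ^ 2) + 8 * ((k + 1) * m) + 4 * (k + 1) := by ring
    have e' : 20 * (k + 1) ^ 2 * (m + 1) =
        20 * ((k + 1) * ((k + 1) * m)) + 20 * (k + 1) ^ 2 := by ring
    have : (k + 1) * m ≤ (k + 1) * ((k + 1) * m) := Nat.le_mul_of_pos_left _ (by omega)
    have : k + 1 ≤ (k + 1) ^ 2 := Nat.le_self_pow (by norm_num) _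
    omega
  have hblock : ∀ p ∈ queenBlock σ m, 0 ≤ p.2 := fun p hp => by
    rw [queenBlock, mem_filter, mem_square] at hp
    exact hp.1.2.2.1
  have hmin := minPoints_add_le hk hblock (n - P)
  rw [Nat.add_sub_cancel' (by omega)] at hmin
  calc 4 * minPoints k n ≤ 4 * ((queenBlock σ m).card + (n - P) * k) := by grw [hmin]
    _ ≤ 4 * (k * ((k + 1) * m ^ 2) + 20 * (k + 1) ^ 2 * (m + 1) * k) := by
        grw [card_queenBlock_le, hrest]
    _ ≤ k * n + 80 * k * (k + 1) ^ 2 * (m + 1) := by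
        have := Nat.mul_le_mul_left k hm_le
        linarith
    _ ≤ k * n + 80 * k * (k + 1) ^ 2 * (Nat.sqrt n + 1) := by grw [hmn]

end MinPoints

lemma tendsto_div_of_le_of_le_add_sqrt {f : ℕ → ℝ} {c C : ℝ} (hlow : ∀ n : ℕ, c * n ≤ f n)
    (hup : ∀ n : ℕ, f n ≤ c * n + C * (√n + 1)) :
    Tendsto (fun n : ℕ => f n / n) atTop (nhds c) := by
  have hsqrt : Tendsto (fun n : ℕ => (√n)⁻¹) atTop (nhds 0) :=
    tendsto_inv_atTop_zero.comp (Real.tendsto_sqrt_atTop.comp tendsto_natCast_atTop_atTop)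
  have herr : Tendsto (fun n : ℕ => c + C * ((√n)⁻¹ + (n : ℝ)⁻¹)) atTop (nhds c) := by
    simpa using (hsqrt.add tendsto_inv_atTop_nhds_zero_nat).const_mul C |>.const_add c
  refine tendsto_of_tendsto_of_tendsto_of_le_of_le' tendsto_const_nhds herr ?_ ?_ <;>
    filter_upwards [eventually_gt_atTop 0] with n hn <;>
    have hn' : (0 : ℝ) < n := by exact_mod_cast hn
  · exact (le_div_iff₀ hn').2 (hlow n)
  · rw [div_le_iff₀ hn']
    have hsq : √(n : ℝ) * √(n : ℝ) = n := Real.mul_self_sqrt hn'.le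
    calc f n ≤ c * n + C * (√n + 1) := hup n
      _ = (c + C * ((√n)⁻¹ + (n : ℝ)⁻¹)) * n := by
        field_simp
        linear_combination C * hsq

theorem stmt8 (k : ℕ) (hk : 2 ≤ k)
    (hσ : ∃ σ : Equiv.Perm (ZMod (k + 1)),
      Function.Bijective (fun i => i + σ i) ∧ Function.Bijective (fun i => i - σ i)) :
    Tendsto (fun n : ℕ => (minPoints k n : ℝ) / n) atTop (nhds ((k : ℝ) / 4)) := by
  obtain ⟨σ, hσ⟩ := hσ
  refine tendsto_div_of_le_of_le_add_sqrt (C := 20 * k * (k + 1) ^ 2) (fun n => ?_) (fun n => ?_)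
  · have : (n * k : ℝ) ≤ 4 * minPoints k n := by exact_mod_cast mul_le_four_mul_minPoints hk n
    linarith
  · have h : (4 * minPoints k n : ℝ) ≤ k * n + 80 * k * (k + 1) ^ 2 * (Nat.sqrt n + 1) := by
      exact_mod_cast four_mul_minPoints_le hσ hk n
    have hC : (0 : ℝ) ≤ 20 * k * (k + 1) ^ 2 := by positivity
    have := mul_le_mul_of_nonneg_left (Real.nat_sqrt_le_real_sqrt (a := n)) hC
    linarith
end

section
/- For every integer k ≥ 1, there exists a permutation σ of ZMod (k+1) such that the maps i ↦ i + σ(i) and i ↦ i - σ(i) on ZMod (k+1) are both bijective if and only if k+1 is coprime with 6. -/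
open Finset

private lemma cast_bij (n : ℕ) [NeZero n] :
    Function.Bijective (fun i : Fin n => ((i : ℕ) : ZMod n)) := by
  rw [Fintype.bijective_iff_injective_and_card]
  refine ⟨fun a b hab => ?_, by simp⟩
  have := congrArg ZMod.val hab
  rwa [ZMod.val_natCast_of_lt a.isLt, ZMod.val_natCast_of_lt b.isLt, ← Fin.ext_iff] at this

private lemma zmod_sum_eq (n : ℕ) [NeZero n] (g : ZMod n → ZMod n) :
    ∑ i : ZMod n, g i = ∑ i ∈ range n, g (i : ZMod n) := by
  rw [← Fin.sum_univ_eq_sum_range (fun i => g (i : ZMod n)) n]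
  exact ((cast_bij n).sum_comp g).symm

private lemma six_sum_sq (m : ℕ) :
    6 * ∑ i ∈ range (m + 1), i * i = m * (m + 1) * (2 * m + 1) := by
  induction m with
  | zero => simp
  | succ p ih =>
    rw [Finset.sum_range_succ, Nat.mul_add, ih]
    ring

theorem stmt12 (k : ℕ) (hk : 1 ≤ k) :
    (∃ σ : Equiv.Perm (ZMod (k + 1)),
      Function.Bijective (fun i => i + σ i) ∧ Function.Bijective (fun i => i - σ i)) ↔
    Nat.Coprime (k + 1) 6 := by
  set n := k + 1 with hn
  have hn2 : 2 ≤ n := by omega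
  constructor
  · rintro ⟨σ, hadd, hsub⟩
    have hs1 : (∑ x : ZMod n, σ x) = ∑ x : ZMod n, x := σ.bijective.sum_comp id
    have hs2 : (∑ x : ZMod n, σ x * σ x) = ∑ x : ZMod n, x * x :=
      σ.bijective.sum_comp (fun x => x * x)
    -- step 1: sum of all elements is 0
    have hS : (∑ i : ZMod n, i) = 0 := by
      have h1 : ∑ i : ZMod n, (i + σ i) = ∑ i : ZMod n, i := hadd.sum_comp id
      rw [Finset.sum_add_distrib, hs1] at h1
      linear_combination h1
    -- n is odd
    have h2 : ¬ (2 ∣ n) := by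
      intro h2
      have e1 : (∑ i : ZMod n, i) = ∑ i ∈ range n, ((i : ℕ) : ZMod n) :=
        zmod_sum_eq n (fun x => x)
      have hS' : ((∑ i ∈ range n, i : ℕ) : ZMod n) = 0 := by
        rw [Nat.cast_sum, ← e1]; exact hS
      rw [ZMod.natCast_eq_zero_iff] at hS'
      obtain ⟨t, ht⟩ := hS'
      have hg := Finset.sum_range_id_mul_two n
      rw [ht] at hg
      have hnpos : 0 < n := by omega
      have heq : n * (t * 2) = n * k := by
        rw [show n * (t * 2) = n * t * 2 from by ring, hg, hn, Nat.add_sub_cancel]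
      have := Nat.eq_of_mul_eq_mul_left hnpos heq
      omega
    -- step 2: 2 * sum of squares = 0
    have hQ2 : (2 : ZMod n) * ∑ i : ZMod n, i * i = 0 := by
      have h1 : ∑ i : ZMod n, (i + σ i) * (i + σ i) = ∑ i : ZMod n, i * i :=
        hadd.sum_comp (fun x => x * x)
      have h2' : ∑ i : ZMod n, (i - σ i) * (i - σ i) = ∑ i : ZMod n, i * i :=
        hsub.sum_comp (fun x => x * x)
      have key : ∑ i : ZMod n, ((i + σ i) * (i + σ i)) + ∑ i : ZMod n, ((i - σ i) * (i - σ i))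
          = (∑ i : ZMod n, i * i + ∑ i : ZMod n, i * i)
            + (∑ i : ZMod n, σ i * σ i + ∑ i : ZMod n, σ i * σ i) := by
        simp only [← Finset.sum_add_distrib]
        apply Finset.sum_congr rfl
        intro i _
        ring
      rw [h1, h2', hs2] at key
      linear_combination -key
    -- step 3: 3 does not divide n
    have h3 : ¬ (3 ∣ n) := by
      intro h3
      have e2 : (∑ i : ZMod n, i * i) = ∑ i ∈ range n, (((i : ℕ) : ZMod n) * ((i : ℕ) : ZMod n)) :=
        zmod_sum_eq n (fun x => x * x)
      have hQ' : ((2 * ∑ i ∈ range n, i * i : ℕ) : ZMod n) = 0 := by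
        push_cast
        rw [← e2, ← hQ2]
      rw [ZMod.natCast_eq_zero_iff] at hQ'
      have hcop : Nat.Coprime n 2 :=
        Nat.coprime_comm.mp ((Nat.prime_two.coprime_iff_not_dvd).mpr h2)
      have hdvdQ : n ∣ ∑ i ∈ range n, i * i := Nat.Coprime.dvd_of_dvd_mul_left hcop hQ'
      obtain ⟨t, ht⟩ := hdvdQ
      have hg := six_sum_sq k
      rw [show k + 1 = n from rfl, ht] at hg
      have hnpos : 0 < n := by omega
      have heq : n * (6 * t) = n * (k * (2 * k + 1)) := by
        rw [show n * (6 * t) = 6 * (n * t) from by ring, hg, hn]; ring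
      have h6 : 6 * t = k * (2 * k + 1) := Nat.eq_of_mul_eq_mul_left hnpos heq
      have h3' : 3 ∣ k * (2 * k + 1) := ⟨2 * t, by omega⟩
      rcases (Nat.prime_three.dvd_mul).mp h3' with h | h <;> omega
    rw [show (6 : ℕ) = 2 * 3 from rfl, Nat.coprime_mul_iff_right]
    exact ⟨Nat.coprime_comm.mp ((Nat.prime_two.coprime_iff_not_dvd).mpr h2),
      Nat.coprime_comm.mp ((Nat.prime_three.coprime_iff_not_dvd).mpr h3)⟩
  · intro hcop
    rw [show (6 : ℕ) = 2 * 3 from rfl, Nat.coprime_mul_iff_right] at hcop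
    have hu2 : IsUnit (2 : ZMod n) := by
      have := (ZMod.isUnit_iff_coprime 2 n).mpr (Nat.coprime_comm.mp hcop.1)
      simpa using this
    have hu3 : IsUnit (3 : ZMod n) := by
      have := (ZMod.isUnit_iff_coprime 3 n).mpr (Nat.coprime_comm.mp hcop.2)
      simpa using this
    have hbij2 : Function.Bijective (fun i : ZMod n => 2 * i) :=
      (Finite.injective_iff_bijective).mp hu2.mul_right_injective
    refine ⟨Equiv.ofBijective _ hbij2, ?_, ?_⟩
    · have heq : (fun i : ZMod n => i + Equiv.ofBijective _ hbij2 i) = fun i => 3 * i := by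
        funext i; simp only [Equiv.ofBijective_apply]; ring
      rw [heq]
      exact (Finite.injective_iff_bijective).mp hu3.mul_right_injective
    · have heq : (fun i : ZMod n => i - Equiv.ofBijective _ hbij2 i) = fun i => -i := by
        funext i; simp only [Equiv.ofBijective_apply]; ring
      rw [heq]
      exact neg_involutive.bijective
end
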